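/- The absolute value function x ↦ |x|, as a total function ℝ → ℝ, is poly-length-computable. -/

import Mathlib

/-!
Write `c = x² + 1`, `v(t) = (x² - 1)/2 · e^{-c² t}` (`decay`), `s = √(x² + v²)` (`approx`) and
`r = c v / s` (`ratio`). Then `0 ≤ s - |x| ≤ |v| ≤ c e^{-c² t}`, and although `s` alone satisfies
no polynomial ODE, the pair `(s, r)` does: `s' = -s r²`, `r' = -r (c² - r²)` (the rate `c²` of `v`
is what makes `r'` polynomial). Adding the constant `c` and the time `t` as coordinates gives a
polynomial system with polynomial initial data `(c/2, x² - 1, c, 0)`. As `|v| ≤ s` gives `|r| ≤ c`,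
its speed lies between `1` (the time coordinate) and `c³`, so length `≥ c³ (μ + 1)` forces
`t ≥ μ + 1`, and then `c e^{-c² t} ≤ e^{c - 1 - c² t} ≤ e^{-μ}`.
-/


/-- The length of the curve `y` between times `0` and `t`
(using one-sided derivatives on `[0, ∞)` and the sup norm). -/
noncomputable def curveLen {d : ℕ} (y : ℝ → Fin d → ℝ) (t : ℝ) : ℝ :=
  ∫ u in (0:ℝ)..t, ‖derivWithin y (Set.Ici 0) u‖

/-- `f :⊆ ℝⁿ → ℝᵐ` with domain `dom` is poly-length-computable. -/
def PolyLengthComputable (n m : ℕ) (dom : Set (Fin n → ℝ))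
    (f : (Fin n → ℝ) → Fin m → ℝ) : Prop :=
  ∃ (d : ℕ) (hd : m ≤ d) (p : Fin d → MvPolynomial (Fin d) ℚ)
    (q : Fin d → MvPolynomial (Fin n) ℚ) (Ω : MvPolynomial (Fin 2) ℝ),
    (∀ α μ : ℝ, 0 ≤ α → 0 ≤ μ → 0 ≤ MvPolynomial.eval ![α, μ] Ω) ∧
    ∀ x ∈ dom, ∃ y : ℝ → Fin d → ℝ,
      (∀ i, y 0 i = MvPolynomial.aeval x (q i)) ∧
      (∀ t : ℝ, 0 ≤ t →
        HasDerivWithinAt y (fun i => MvPolynomial.aeval (y t) (p i)) (Set.Ici 0) t) ∧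
      (∀ t : ℝ, 0 ≤ t → ∀ μ : ℝ, 0 ≤ μ →
        MvPolynomial.eval ![‖x‖, μ] Ω ≤ curveLen y t →
        ‖(fun j : Fin m => y t (Fin.castLE hd j)) - f x‖ ≤ Real.exp (-μ)) ∧
      (∀ t : ℝ, 0 ≤ t → t ≤ curveLen y t)


open MvPolynomial Real Set

theorem pi_norm_eq_norm_default {ι E : Type*} [Fintype ι] [Unique ι] [SeminormedAddCommGroup E]
    (x : ι → E) : ‖x‖ = ‖x default‖ := by
  rw [show x = fun _ => x default from funext fun i => congrArg x (Unique.uniq _ i)]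
  exact pi_norm_const _

section curveLen

variable {d : ℕ} {y g : ℝ → Fin d → ℝ} {t : ℝ}

theorem curveLen_eq_integral (hy : ∀ u, 0 ≤ u → HasDerivWithinAt y (g u) (Ici 0) u)
    (ht : 0 ≤ t) : curveLen y t = ∫ u in (0 : ℝ)..t, ‖g u‖ :=
  intervalIntegral.integral_congr fun u hu => by
    rw [uIcc_of_le ht] at hu
    rw [(hy u hu.1).derivWithin (uniqueDiffOn_Ici 0 u hu.1)]

theorem le_curveLen_of_one_le_norm (hy : ∀ u, 0 ≤ u → HasDerivWithinAt y (g u) (Ici 0) u)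
    (hg : Continuous g) (h1 : ∀ u, 0 ≤ u → 1 ≤ ‖g u‖) (ht : 0 ≤ t) : t ≤ curveLen y t := by
  rw [curveLen_eq_integral hy ht]
  calc t = ∫ _ in (0 : ℝ)..t, (1 : ℝ) := by simp
    _ ≤ ∫ u in (0 : ℝ)..t, ‖g u‖ :=
      intervalIntegral.integral_mono_on ht intervalIntegrable_const
        (hg.norm.intervalIntegrable _ _) fun u hu => h1 u hu.1

theorem curveLen_le_of_norm_le {K : ℝ} (hy : ∀ u, 0 ≤ u → HasDerivWithinAt y (g u) (Ici 0) u)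
    (hK : ∀ u, 0 ≤ u → ‖g u‖ ≤ K) (ht : 0 ≤ t) : curveLen y t ≤ K * t := by
  rw [curveLen_eq_integral hy ht]
  calc (∫ u in (0 : ℝ)..t, ‖g u‖) ≤ ‖∫ u in (0 : ℝ)..t, ‖g u‖‖ := le_norm_self _
    _ ≤ K * |t - 0| := intervalIntegral.norm_integral_le_of_norm_le_const fun u hu => by
        rw [uIoc_of_le ht] at hu
        simpa using hK u hu.1.le
    _ = K * t := by rw [sub_zero, abs_of_nonneg ht]

end curveLen

namespace AbsFlow

variable (x t : ℝ)

noncomputable def decay : ℝ := (x ^ 2 - 1) / 2 * exp (-(x ^ 2 + 1) ^ 2 * t)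

noncomputable def approx : ℝ := √(x ^ 2 + decay x t ^ 2)

noncomputable def ratio : ℝ := (x ^ 2 + 1) * decay x t / approx x t

noncomputable def curve : Fin 4 → ℝ := ![approx x t, ratio x t, x ^ 2 + 1, t]

def field (z : Fin 4 → ℝ) : Fin 4 → ℝ := ![-(z 0 * z 1 ^ 2), -(z 1 * (z 2 ^ 2 - z 1 ^ 2)), 0, 1]

noncomputable def fieldPoly : Fin 4 → MvPolynomial (Fin 4) ℚ :=
  ![-(X 0 * X 1 ^ 2), -(X 1 * (X 2 ^ 2 - X 1 ^ 2)), 0, 1]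

noncomputable def initPoly : Fin 4 → MvPolynomial (Fin 1) ℚ :=
  ![C (1 / 2) * (X 0 ^ 2 + 1), X 0 ^ 2 - 1, X 0 ^ 2 + 1, 0]

noncomputable def modulus : MvPolynomial (Fin 2) ℝ := (X 0 ^ 2 + 1) ^ 3 * (X 1 + 1)

theorem eval_modulus (α μ : ℝ) : eval ![α, μ] modulus = (α ^ 2 + 1) ^ 3 * (μ + 1) := by
  simp [modulus]

theorem aeval_fieldPoly (z : Fin 4 → ℝ) : (fun i => aeval z (fieldPoly i)) = field z := by
  funext i
  fin_cases i <;> simp [fieldPoly, field]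

theorem decay_zero : decay x 0 = (x ^ 2 - 1) / 2 := by simp [decay]

theorem approx_zero : approx x 0 = (x ^ 2 + 1) / 2 := by
  rw [approx, decay_zero, show x ^ 2 + ((x ^ 2 - 1) / 2) ^ 2 = ((x ^ 2 + 1) / 2) ^ 2 by ring]
  exact sqrt_sq (by positivity)

theorem ratio_zero : ratio x 0 = x ^ 2 - 1 := by
  rw [ratio, decay_zero, approx_zero]
  field_simp

theorem aeval_initPoly (z : Fin 1 → ℝ) : (fun i => aeval z (initPoly i)) = curve (z 0) 0 := by
  funext i
  fin_cases i <;> simp [initPoly, curve, approx_zero, ratio_zero, div_eq_inv_mul]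

theorem sq_add_decay_sq_pos : 0 < x ^ 2 + decay x t ^ 2 := by
  rcases eq_or_ne x 0 with rfl | hx
  · have : decay 0 t ≠ 0 := by simp [decay, (exp_pos _).ne']
    positivity
  · positivity

theorem approx_pos : 0 < approx x t := sqrt_pos.2 (sq_add_decay_sq_pos x t)

theorem abs_le_approx : |x| ≤ approx x t := by
  rw [← sqrt_sq_eq_abs]
  exact sqrt_le_sqrt (le_add_of_nonneg_right (sq_nonneg _))

theorem abs_decay_le_approx : |decay x t| ≤ approx x t := by
  rw [← sqrt_sq_eq_abs]
  exact sqrt_le_sqrt (le_add_of_nonneg_left (sq_nonneg _))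

theorem approx_le_abs_add : approx x t ≤ |x| + |decay x t| := by
  rw [approx, ← sqrt_sq (by positivity : 0 ≤ |x| + |decay x t|)]
  refine sqrt_le_sqrt ?_
  nlinarith [abs_nonneg x, abs_nonneg (decay x t), sq_abs x, sq_abs (decay x t)]

theorem abs_decay_le : |decay x t| ≤ (x ^ 2 + 1) * exp (-(x ^ 2 + 1) ^ 2 * t) := by
  rw [decay, abs_mul, abs_of_pos (exp_pos _), abs_div, abs_two]
  gcongr
  rw [div_le_iff₀ two_pos, abs_le]
  constructor <;> nlinarith [sq_nonneg x]

theorem abs_decay_le_of_nonneg (ht : 0 ≤ t) : |decay x t| ≤ x ^ 2 + 1 :=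
  (abs_decay_le x t).trans <| mul_le_of_le_one_right (by positivity) <|
    exp_le_one_iff.2 <| mul_nonpos_of_nonpos_of_nonneg (by nlinarith [sq_nonneg x]) ht

theorem abs_ratio_le : |ratio x t| ≤ x ^ 2 + 1 := by
  rw [ratio, abs_div, abs_mul, abs_of_pos (by positivity : (0 : ℝ) < x ^ 2 + 1),
    abs_of_pos (approx_pos x t), div_le_iff₀ (approx_pos x t)]
  exact mul_le_mul_of_nonneg_left (abs_decay_le_approx x t) (by positivity)

theorem hasDerivAt_decay : HasDerivAt (decay x) (-(x ^ 2 + 1) ^ 2 * decay x t) t :=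
  ((((hasDerivAt_id t).const_mul (-(x ^ 2 + 1) ^ 2)).exp).const_mul ((x ^ 2 - 1) / 2)).congr_deriv
    (by simp only [decay, id]; ring)

theorem hasDerivAt_approx : HasDerivAt (approx x) (-(approx x t * ratio x t ^ 2)) t := by
  refine ((((hasDerivAt_decay x t).pow 2).const_add (x ^ 2)).sqrt
    (sq_add_decay_sq_pos x t).ne').congr_deriv ?_
  have := (approx_pos x t).ne'
  rw [ratio, show √(x ^ 2 + (decay x ^ 2) t) = approx x t from rfl]
  push_cast
  field_simp

theorem hasDerivAt_ratio :
    HasDerivAt (ratio x) (-(ratio x t * ((x ^ 2 + 1) ^ 2 - ratio x t ^ 2))) t := by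
  refine (((hasDerivAt_decay x t).const_mul (x ^ 2 + 1)).div (hasDerivAt_approx x t)
    (approx_pos x t).ne').congr_deriv ?_
  have := (approx_pos x t).ne'
  rw [ratio]
  field_simp
  ring

theorem hasDerivAt_curve : HasDerivAt (curve x) (field (curve x t)) t := by
  rw [hasDerivAt_pi]
  intro i
  fin_cases i
  · exact hasDerivAt_approx x t
  · exact hasDerivAt_ratio x t
  · exact hasDerivAt_const t (x ^ 2 + 1)
  · exact hasDerivAt_id t

theorem continuous_field : Continuous field := by
  unfold field
  fun_prop

theorem one_le_norm_field (z : Fin 4 → ℝ) : 1 ≤ ‖field z‖ := by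
  simpa [field] using norm_le_pi_norm (field z) 3

theorem approx_mul_ratio_sq_le (ht : 0 ≤ t) : approx x t * ratio x t ^ 2 ≤ (x ^ 2 + 1) ^ 3 := by
  have hs := approx_pos x t
  have hv := abs_decay_le_approx x t
  calc approx x t * ratio x t ^ 2 = (x ^ 2 + 1) ^ 2 * (|decay x t| * |decay x t| / approx x t) := by
        rw [ratio, abs_mul_abs_self]
        field_simp
    _ ≤ (x ^ 2 + 1) ^ 2 * |decay x t| := by
        refine mul_le_mul_of_nonneg_left ?_ (by positivity)
        rw [div_le_iff₀ hs]
        exact mul_le_mul_of_nonneg_left hv (abs_nonneg _)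
    _ ≤ (x ^ 2 + 1) ^ 2 * (x ^ 2 + 1) :=
        mul_le_mul_of_nonneg_left (abs_decay_le_of_nonneg x t ht) (by positivity)
    _ = (x ^ 2 + 1) ^ 3 := by ring

theorem abs_ratio_mul_le :
    |ratio x t| * |(x ^ 2 + 1) ^ 2 - ratio x t ^ 2| ≤ (x ^ 2 + 1) ^ 3 := by
  have hr := abs_ratio_le x t
  have hr2 : ratio x t ^ 2 ≤ (x ^ 2 + 1) ^ 2 := sq_le_sq' (abs_le.1 hr).1 (abs_le.1 hr).2
  rw [abs_of_nonneg (sub_nonneg.2 hr2)]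
  calc |ratio x t| * ((x ^ 2 + 1) ^ 2 - ratio x t ^ 2) ≤ (x ^ 2 + 1) * (x ^ 2 + 1) ^ 2 :=
        mul_le_mul hr (by linarith [sq_nonneg (ratio x t)]) (sub_nonneg.2 hr2) (by positivity)
    _ = (x ^ 2 + 1) ^ 3 := by ring

theorem norm_field_curve_le (ht : 0 ≤ t) : ‖field (curve x t)‖ ≤ (x ^ 2 + 1) ^ 3 := by
  refine (pi_norm_le_iff_of_nonneg (by positivity)).2 fun i => ?_
  fin_cases i
  · show ‖-(approx x t * ratio x t ^ 2)‖ ≤ _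
    rw [norm_neg, norm_of_nonneg (mul_nonneg (approx_pos x t).le (sq_nonneg _))]
    exact approx_mul_ratio_sq_le x t ht
  · show ‖-(ratio x t * ((x ^ 2 + 1) ^ 2 - ratio x t ^ 2))‖ ≤ _
    rw [norm_neg, norm_mul]
    exact abs_ratio_mul_le x t
  · show ‖(0 : ℝ)‖ ≤ _
    rw [norm_zero]
    positivity
  · show ‖(1 : ℝ)‖ ≤ _
    rw [norm_one]
    exact one_le_pow₀ (by nlinarith [sq_nonneg x])

theorem approx_sub_abs_le_exp_neg {μ : ℝ} (hμ : 0 ≤ μ) (ht : μ + 1 ≤ t) :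
    approx x t - |x| ≤ exp (-μ) := by
  have hc : 1 ≤ x ^ 2 + 1 := by nlinarith [sq_nonneg x]
  calc approx x t - |x| ≤ |decay x t| := by linarith [approx_le_abs_add x t]
    _ ≤ (x ^ 2 + 1) * exp (-(x ^ 2 + 1) ^ 2 * t) := abs_decay_le x t
    _ ≤ exp (x ^ 2 + 1 - 1) * exp (-(x ^ 2 + 1) ^ 2 * t) := by
        gcongr
        linarith [add_one_le_exp (x ^ 2 + 1 - 1)]
    _ = exp (x ^ 2 - (x ^ 2 + 1) ^ 2 * t) := by rw [← exp_add]; ring_nf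
    _ ≤ exp (-μ) := by
        have h1 := mul_le_mul_of_nonneg_left ht (sq_nonneg (x ^ 2 + 1))
        have h2 : μ ≤ (x ^ 2 + 1) ^ 2 * μ := le_mul_of_one_le_left hμ (one_le_pow₀ hc)
        exact exp_le_exp.2 (by nlinarith)

theorem le_curveLen_curve (ht : 0 ≤ t) : t ≤ curveLen (curve x) t :=
  le_curveLen_of_one_le_norm (fun u _ => (hasDerivAt_curve x u).hasDerivWithinAt)
    (continuous_field.comp (continuous_iff_continuousAt.2 fun u =>
      (hasDerivAt_curve x u).continuousAt)) (fun _ _ => one_le_norm_field _) ht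

theorem curveLen_curve_le (ht : 0 ≤ t) : curveLen (curve x) t ≤ (x ^ 2 + 1) ^ 3 * t :=
  curveLen_le_of_norm_le (fun u _ => (hasDerivAt_curve x u).hasDerivWithinAt)
    (norm_field_curve_le x) ht

theorem dist_approx_abs_le {μ : ℝ} (hμ : 0 ≤ μ) (ht : 0 ≤ t)
    (hlen : (x ^ 2 + 1) ^ 3 * (μ + 1) ≤ curveLen (curve x) t) :
    dist (approx x t) |x| ≤ exp (-μ) := by
  have htμ : μ + 1 ≤ t :=
    le_of_mul_le_mul_left (hlen.trans (curveLen_curve_le x t ht)) (by positivity)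
  rw [dist_eq, abs_of_nonneg (sub_nonneg.2 (abs_le_approx x t))]
  exact approx_sub_abs_le_exp_neg x t hμ htμ

end AbsFlow

open AbsFlow

/-- The absolute value function, as a total function ℝ → ℝ, is poly-length-computable. -/
theorem abs_polyLengthComputable :
    PolyLengthComputable 1 1 Set.univ (fun x _ => |x 0|) := by
  refine ⟨4, by norm_num, fieldPoly, initPoly, modulus,
    fun α μ _ _ => by rw [eval_modulus]; positivity, fun x _ => ⟨curve (x 0), ?_, ?_, ?_, ?_⟩⟩
  · exact fun i => congrFun (aeval_initPoly x).symm i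
  · intro t _
    rw [aeval_fieldPoly]
    exact (hasDerivAt_curve _ t).hasDerivWithinAt
  · intro t ht μ hμ hΩ
    rw [eval_modulus, pi_norm_eq_norm_default, Real.norm_eq_abs, sq_abs, Fin.default_eq_zero] at hΩ
    rw [pi_norm_eq_norm_default, Pi.sub_apply, ← dist_eq_norm]
    exact dist_approx_abs_le (x 0) t hμ ht hΩ
  · exact fun t ht => le_curveLen_curve (x 0) t ht
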